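/- arXiv:2112.13284 — 3 statements merged into one kernel-verified Lean document; each statement's English description precedes it below -/
import Mathlib

section
/- Let F be a real n×n matrix and γ > 0 a real number such that F + Fᵀ − γI is positive definite. Then for every pair (λ, φ) ∈ ℝⁿ × ℝⁿ with (λ, φ) ≠ (0, 0), one has λᵀφ + (1/(2γ))‖Fλ − φ‖² > 0. -/
open Matrix

lemma dp_self_nonneg {n : ℕ} (v : Fin n → ℝ) : 0 ≤ v ⬝ᵥ v :=
  Finset.sum_nonneg fun _ _ => mul_self_nonneg _

lemma dp_self_pos {n : ℕ} (v : Fin n → ℝ) (hv : v ≠ 0) : 0 < v ⬝ᵥ v := by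
  rcases Function.ne_iff.mp hv with ⟨i, hi⟩
  exact Finset.sum_pos' (fun j _ => mul_self_nonneg _)
    ⟨i, Finset.mem_univ i, mul_self_pos.mpr hi⟩

/-- If `F + Fᵀ - γI` is positive definite (with `γ > 0`), then the quadratic form
`λᵀφ + (1/(2γ))‖Fλ - φ‖²` is positive definite on `ℝⁿ × ℝⁿ`. -/
theorem violation_quadratic_form_posdef {n : ℕ} (F : Matrix (Fin n) (Fin n) ℝ)
    (γ : ℝ) (hγ : 0 < γ)
    (hF : ∀ v : Fin n → ℝ, v ≠ 0 → 0 < v ⬝ᵥ (F + Fᵀ - γ • (1 : Matrix (Fin n) (Fin n) ℝ)).mulVec v)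
    (lam phi : Fin n → ℝ) (h : ¬(lam = 0 ∧ phi = 0)) :
    0 < lam ⬝ᵥ phi +
      (1 / (2 * γ)) * ((F.mulVec lam - phi) ⬝ᵥ (F.mulVec lam - phi)) := by
  by_cases hl : lam = 0
  · have hphi : phi ≠ 0 := fun hp => h ⟨hl, hp⟩
    subst hl
    have h0 : F.mulVec 0 = 0 := Matrix.mulVec_zero F
    simp only [h0, zero_sub, zero_dotProduct, zero_add, dotProduct_neg, neg_dotProduct,
      neg_neg]
    have := dp_self_pos phi hphi
    positivity
  · set w : Fin n → ℝ := F.mulVec lam - phi with hw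
    have key := hF lam hl
    have hAt : lam ⬝ᵥ Fᵀ.mulVec lam = lam ⬝ᵥ F.mulVec lam := by
      rw [Matrix.mulVec_transpose, dotProduct_comm, ← Matrix.dotProduct_mulVec]
    have hkey : γ * (lam ⬝ᵥ lam) < 2 * (lam ⬝ᵥ F.mulVec lam) := by
      have heq : lam ⬝ᵥ (F + Fᵀ - γ • (1 : Matrix (Fin n) (Fin n) ℝ)).mulVec lam
          = 2 * (lam ⬝ᵥ F.mulVec lam) - γ * (lam ⬝ᵥ lam) := by
        rw [Matrix.sub_mulVec, Matrix.add_mulVec, Matrix.smul_mulVec,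
          Matrix.one_mulVec, dotProduct_sub, dotProduct_add, dotProduct_smul, hAt]
        simp [smul_eq_mul]; ring
      rw [heq] at key
      linarith
    have h2 : 0 ≤ (γ • lam - w) ⬝ᵥ (γ • lam - w) := dp_self_nonneg _
    have hexp : (γ • lam - w) ⬝ᵥ (γ • lam - w)
        = γ * γ * (lam ⬝ᵥ lam) - 2 * γ * (lam ⬝ᵥ w) + w ⬝ᵥ w := by
      simp only [dotProduct_sub, sub_dotProduct, smul_dotProduct, dotProduct_smul,
        smul_eq_mul, dotProduct_comm w lam]
      ring
    have hlw : lam ⬝ᵥ w = lam ⬝ᵥ F.mulVec lam - lam ⬝ᵥ phi := by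
      rw [hw, dotProduct_sub]
    rw [hexp, hlw] at h2
    have h4 : 0 < 2 * γ * (lam ⬝ᵥ phi) + w ⬝ᵥ w := by
      nlinarith [mul_lt_mul_of_pos_left hkey hγ]
    have heq2 : lam ⬝ᵥ phi + (1 / (2 * γ)) * (w ⬝ᵥ w)
        = (2 * γ * (lam ⬝ᵥ phi) + w ⬝ᵥ w) / (2 * γ) := by
      field_simp
    rw [heq2]
    positivity
end

section
/- Let F be a real n×n matrix with F + Fᵀ positive definite, let q ∈ ℝⁿ, and let γ > 0 be such that F + Fᵀ − γI is positive definite. Let λ* be the solution of the linear complementarity problem LCP(F, q), and set φ* = Fλ* + q. Then (λ*, φ*) is the unique global minimizer of f(λ, φ) = λᵀφ + (1/(2γ))‖Fλ + q − φ‖² over the set {(λ, φ) : λ ≥ 0, φ ≥ 0}: f(λ*, φ*) = 0, and f(λ, φ) > 0 for every λ ≥ 0, φ ≥ 0 with (λ, φ) ≠ (λ*, φ*). -/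
open Matrix

/-- `lam` solves the linear complementarity problem `LCP(F, q)`. -/
def IsLCPSol {n : ℕ} (F : Matrix (Fin n) (Fin n) ℝ) (q lam : Fin n → ℝ) : Prop :=
  (∀ i, 0 ≤ lam i) ∧ (∀ i, 0 ≤ (F.mulVec lam + q) i) ∧ lam ⬝ᵥ (F.mulVec lam + q) = 0

lemma dot_nonneg {n : ℕ} {v w : Fin n → ℝ} (hv : ∀ i, 0 ≤ v i) (hw : ∀ i, 0 ≤ w i) :
    0 ≤ v ⬝ᵥ w :=
  Finset.sum_nonneg fun i _ => mul_nonneg (hv i) (hw i)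

lemma lcp_unique {n : ℕ} (F : Matrix (Fin n) (Fin n) ℝ) (q : Fin n → ℝ)
    (hF : ∀ v : Fin n → ℝ, v ≠ 0 → 0 < v ⬝ᵥ (F + Fᵀ).mulVec v)
    {lam lam' : Fin n → ℝ} (h : IsLCPSol F q lam) (h' : IsLCPSol F q lam') :
    lam = lam' := by
  by_contra hne
  set d := lam - lam' with hd
  have hdne : d ≠ 0 := sub_ne_zero_of_ne hne
  have hpos := hF d hdne
  have key : d ⬝ᵥ (F + Fᵀ).mulVec d = 2 * (d ⬝ᵥ F.mulVec d) := by
    have h1 : d ⬝ᵥ Fᵀ.mulVec d = d ⬝ᵥ F.mulVec d := by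
      rw [dotProduct_mulVec, vecMul_transpose, dotProduct_comm]
    rw [Matrix.add_mulVec, dotProduct_add, h1]; ring
  have hFd : d ⬝ᵥ F.mulVec d =
      d ⬝ᵥ (F.mulVec lam + q) - d ⬝ᵥ (F.mulVec lam' + q) := by
    rw [hd, Matrix.mulVec_sub]
    simp [dotProduct_sub, dotProduct_add]
  have e1 : d ⬝ᵥ (F.mulVec lam + q) = - (lam' ⬝ᵥ (F.mulVec lam + q)) := by
    rw [hd, sub_dotProduct, h.2.2]; ring
  have e2 : d ⬝ᵥ (F.mulVec lam' + q) = lam ⬝ᵥ (F.mulVec lam' + q) := by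
    rw [hd, sub_dotProduct, h'.2.2]; ring
  have n1 : 0 ≤ lam' ⬝ᵥ (F.mulVec lam + q) := dot_nonneg h'.1 h.2.1
  have n2 : 0 ≤ lam ⬝ᵥ (F.mulVec lam' + q) := dot_nonneg h.1 h'.2.1
  rw [key, hFd, e1, e2] at hpos
  linarith

/-- Lemma 2 of the paper: if `lam*` solves `LCP(F, q)` and `φ* = Fλ* + q`, then
`(λ*, φ*)` is the unique global minimizer of
`f(λ, φ) = λᵀφ + (1/(2γ))‖Fλ + q - φ‖²` over the nonnegative orthant, with value `0`. -/
theorem lcp_sol_unique_min_of_violation {n : ℕ} (F : Matrix (Fin n) (Fin n) ℝ)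
    (q : Fin n → ℝ) (γ : ℝ) (hγ : 0 < γ)
    (hF : ∀ v : Fin n → ℝ, v ≠ 0 → 0 < v ⬝ᵥ (F + Fᵀ).mulVec v)
    (hγF : ∀ v : Fin n → ℝ, v ≠ 0 →
      0 < v ⬝ᵥ (F + Fᵀ - γ • (1 : Matrix (Fin n) (Fin n) ℝ)).mulVec v)
    (lamStar : Fin n → ℝ) (hsol : IsLCPSol F q lamStar)
    (phiStar : Fin n → ℝ) (hphiStar : phiStar = F.mulVec lamStar + q) :
    (lamStar ⬝ᵥ phiStar +
        (1 / (2 * γ)) * ((F.mulVec lamStar + q - phiStar) ⬝ᵥ (F.mulVec lamStar + q - phiStar))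
      = 0) ∧
    ∀ lam phi : Fin n → ℝ, (∀ i, 0 ≤ lam i) → (∀ i, 0 ≤ phi i) →
      ¬(lam = lamStar ∧ phi = phiStar) →
      0 < lam ⬝ᵥ phi +
        (1 / (2 * γ)) * ((F.mulVec lam + q - phi) ⬝ᵥ (F.mulVec lam + q - phi)) := by
  constructor
  · rw [hphiStar]
    simp [hsol.2.2]
  · intro lam phi hlam hphi hne
    have ht1 : 0 ≤ lam ⬝ᵥ phi := dot_nonneg hlam hphi
    have ht2 : 0 ≤ (F.mulVec lam + q - phi) ⬝ᵥ (F.mulVec lam + q - phi) :=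
      Finset.sum_nonneg fun i _ => mul_self_nonneg _
    have hc : 0 < 1 / (2 * γ) := by positivity
    rcases lt_or_eq_of_le ht1 with h1 | h1
    · nlinarith
    rcases lt_or_eq_of_le ht2 with h2 | h2
    · nlinarith
    -- both zero: then lam solves LCP, contradiction with hne
    exfalso
    have hres : F.mulVec lam + q - phi = 0 :=
      (dotProduct_self_eq_zero).mp h2.symm
    have hphieq : phi = F.mulVec lam + q := by
      have := sub_eq_zero.mp hres
      exact this.symm
    have hsol' : IsLCPSol F q lam := by
      refine ⟨hlam, ?_, ?_⟩
      · intro i; rw [← hphieq]; exact hphi i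
      · rw [← hphieq]; exact h1.symm
    have hleq : lam = lamStar := lcp_unique F q hF hsol' hsol
    exact hne ⟨hleq, by rw [hphieq, hleq, ← hphiStar]⟩
end

section
/- Let F ∈ ℝ^{n×n} with F + Fᵀ positive definite, let q ∈ ℝⁿ, and let λ* solve LCP(F, q). Set w* = Fλ* + q and suppose strict complementarity holds: for every index i, λ*[i] > 0 or w*[i] > 0. Then the matrix S = diag(w*) + diag(λ*)·F is invertible. -/
open Matrix

/-- Under strict complementarity, `S = diag(w*) + diag(λ*) F` is invertible. -/
theorem jacobian_invertible_of_strict_complementarity {n : ℕ}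
    (F : Matrix (Fin n) (Fin n) ℝ) (q : Fin n → ℝ)
    (hF : ∀ v : Fin n → ℝ, v ≠ 0 → 0 < v ⬝ᵥ (F + Fᵀ).mulVec v)
    (lamStar : Fin n → ℝ) (hsol : IsLCPSol F q lamStar)
    (wStar : Fin n → ℝ) (hw : wStar = F.mulVec lamStar + q)
    (hstrict : ∀ i, 0 < lamStar i ∨ 0 < wStar i) :
    IsUnit (Matrix.diagonal wStar + Matrix.diagonal lamStar * F) := by
  obtain ⟨hlam, hwpos, hdot⟩ := hsol
  -- pointwise complementarity
  have hwnn : ∀ i, 0 ≤ wStar i := by intro i; rw [hw]; exact hwpos i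
  have hcomp : ∀ i, lamStar i * wStar i = 0 := by
    have hsum : ∑ i, lamStar i * wStar i = 0 := by
      rw [hw] at *; simpa [dotProduct] using hdot
    intro i
    have := Finset.sum_eq_zero_iff_of_nonneg
      (fun j _ => mul_nonneg (hlam j) (hwnn j)) |>.mp hsum i (Finset.mem_univ i)
    exact this
  rw [Matrix.isUnit_iff_isUnit_det, isUnit_iff_ne_zero]
  intro hdet
  obtain ⟨v, hv0, hSv⟩ := (Matrix.exists_mulVec_eq_zero_iff).mpr hdet
  -- componentwise: w i * v i + λ i * (F v) i = 0
  have hcomp2 : ∀ i, wStar i * v i + lamStar i * (F.mulVec v) i = 0 := by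
    intro i
    have := congrFun hSv i
    simpa [Matrix.add_mulVec, Matrix.mulVec_diagonal, ← Matrix.mulVec_mulVec,
      Pi.add_apply] using this
  have hkey : ∀ i, v i * (F.mulVec v) i = 0 := by
    intro i
    rcases hstrict i with hl | hwp
    · -- λ_i > 0, so w_i = 0, so (Fv)_i = 0
      have hw0 : wStar i = 0 := by
        by_contra h
        have : 0 < lamStar i * wStar i :=
          mul_pos hl (lt_of_le_of_ne (hwnn i) (Ne.symm h))
        exact this.ne' (hcomp i)
      have := hcomp2 i
      rw [hw0, zero_mul, zero_add] at this
      have hFv : (F.mulVec v) i = 0 := by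
        rcases mul_eq_zero.mp this with h | h
        · exact absurd h hl.ne'
        · exact h
      rw [hFv, mul_zero]
    · -- w_i > 0, so λ_i = 0, so v_i = 0
      have hl0 : lamStar i = 0 := by
        by_contra h
        have : 0 < lamStar i * wStar i :=
          mul_pos (lt_of_le_of_ne (hlam i) (Ne.symm h)) hwp
        exact this.ne' (hcomp i)
      have := hcomp2 i
      rw [hl0, zero_mul, add_zero] at this
      have hvi : v i = 0 := by
        rcases mul_eq_zero.mp this with h | h
        · exact absurd h hwp.ne'
        · exact h
      rw [hvi, zero_mul]
  have hquad : v ⬝ᵥ F.mulVec v = 0 := by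
    unfold dotProduct
    exact Finset.sum_eq_zero fun i _ => hkey i
  have hsymq : v ⬝ᵥ Fᵀ.mulVec v = 0 := by
    rw [Matrix.dotProduct_mulVec, Matrix.vecMul_transpose, dotProduct_comm]
    exact hquad
  have := hF v hv0
  rw [Matrix.add_mulVec, dotProduct_add, hquad, hsymq] at this
  simp at this
end
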